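/- Let Δ ⊂ ℝ^d be a d-dimensional reflexive polytope with 0 as its unique interior lattice point, and let Δ = Δ_1 + ⋯ + Δ_r be a centered nef-partition (Δ_i lattice polytopes with 0 ∈ Δ_i and lattice points p_i ∈ Δ_i summing to 0, i.e. p_i = 0). For i = 1, …, r define ∇_i := {y ∈ ℝ^d : ⟨x,y⟩ ≥ −δ_{ij} for all x ∈ Δ_j, j = 1, …, r}. Then each ∇_i is a lattice polytope containing 0; the Minkowski sum ∇ := ∇_1 + ⋯ + ∇_r is a d-dimensional reflexive polytope with 0 as its unique interior lattice point; and Δ_i = {x ∈ ℝ^d : ⟨x,y⟩ ≥ −δ_{ij} for all y ∈ ∇_j, j = 1, …, r} for every i. In other words, ∇_1, …, ∇_r is a centered nef-partition dual to Δ_1, …, Δ_r. -/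

import Mathlib

open Pointwise

noncomputable section

/-- A point of `ℝ^n` all of whose coordinates are integers (a lattice point of `ℤ^n`). -/
def IsLatticePt {n : ℕ} (x : Fin n → ℝ) : Prop := ∀ k, ∃ m : ℤ, x k = (m : ℝ)

/-- A lattice polytope: the convex hull of finitely many lattice points. -/
def IsLatticePoly {n : ℕ} (P : Set (Fin n → ℝ)) : Prop :=
  ∃ V : Finset (Fin n → ℝ), V.Nonempty ∧ (∀ v ∈ V, IsLatticePt v) ∧
    P = convexHull ℝ (V : Set (Fin n → ℝ))

/-- The standard inner product pairing on `ℝ^n`. -/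
def pairR {n : ℕ} (x y : Fin n → ℝ) : ℝ := ∑ k, x k * y k

/-- The dual polytope `P* = {y : ⟨x,y⟩ ≥ -1 ∀ x ∈ P}`. -/
def dualPoly {n : ℕ} (P : Set (Fin n → ℝ)) : Set (Fin n → ℝ) :=
  {y | ∀ x ∈ P, -1 ≤ pairR x y}

/-- A reflexive polytope: a lattice polytope with `0` in its interior whose dual
polytope is again a lattice polytope. -/
def IsReflexivePoly {n : ℕ} (P : Set (Fin n → ℝ)) : Prop :=
  IsLatticePoly P ∧ (0 : Fin n → ℝ) ∈ interior P ∧ IsLatticePoly (dualPoly P)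

/-- The dimension of a polytope: the dimension of the direction of its affine span. -/
def polyDim {n : ℕ} (P : Set (Fin n → ℝ)) : ℕ :=
  Module.finrank ℝ (affineSpan ℝ P).direction

/-- A (full-dimensional) Gorenstein polytope of index `r`: `rP` has `m` as its unique
interior lattice point and `rP - m` is reflexive. -/
def IsGorensteinPoly {n : ℕ} (P : Set (Fin n → ℝ)) (r : ℕ) (m : Fin n → ℝ) : Prop :=
  IsLatticePoly P ∧ IsLatticePt m ∧
  (∀ x, IsLatticePt x → (x ∈ interior ((r : ℝ) • P) ↔ x = m)) ∧
  IsReflexivePoly ((fun x => x - m) '' ((r : ℝ) • P))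

/-- `y` is a point of the lattice dual to the (saturated) lattice `ℤ^n ∩ W` inside `W`. -/
def IsDualLatticePt {n : ℕ} (W : Submodule ℝ (Fin n → ℝ)) (y : Fin n → ℝ) : Prop :=
  y ∈ W ∧ ∀ x ∈ W, IsLatticePt x → ∃ m : ℤ, pairR x y = (m : ℝ)

/-- Reflexivity of a (possibly lower-dimensional) lattice polytope inside its linear
span: `0` is in the relative interior and the dual polytope taken inside the linear
span is a lattice polytope with respect to the dual lattice. -/
def IsReflexiveIn {n : ℕ} (P : Set (Fin n → ℝ)) : Prop :=
  IsLatticePoly P ∧ (0 : Fin n → ℝ) ∈ intrinsicInterior ℝ P ∧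
  ∃ V : Finset (Fin n → ℝ), V.Nonempty ∧
    (∀ v ∈ V, IsDualLatticePt (Submodule.span ℝ P) v) ∧
    {y | y ∈ Submodule.span ℝ P ∧ ∀ x ∈ P, -1 ≤ pairR x y} =
      convexHull ℝ (V : Set (Fin n → ℝ))

/-- Gorenstein polytope of index `r` (possibly lower-dimensional): `rP` has `m` as its
unique relative-interior lattice point and `rP - m` is reflexive within its span. -/
def IsGorensteinIn {n : ℕ} (P : Set (Fin n → ℝ)) (r : ℕ) (m : Fin n → ℝ) : Prop :=
  IsLatticePoly P ∧ IsLatticePt m ∧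
  (∀ x, IsLatticePt x → (x ∈ intrinsicInterior ℝ ((r : ℝ) • P) ↔ x = m)) ∧
  IsReflexiveIn ((fun x => x - m) '' ((r : ℝ) • P))

/-- The Minkowski sum `Δ 0 + ⋯ + Δ (r-1)` of a family of sets. -/
def minkSum {n r : ℕ} (Δ : Fin r → Set (Fin n → ℝ)) : Set (Fin n → ℝ) :=
  {x | ∃ f : Fin r → (Fin n → ℝ), (∀ i, f i ∈ Δ i) ∧ x = ∑ i, f i}

/-- The Minkowski sum `Σ_{i ∈ I} Δ i`. -/
def minkSumOver {n r : ℕ} (I : Finset (Fin r)) (Δ : Fin r → Set (Fin n → ℝ)) :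
    Set (Fin n → ℝ) :=
  {x | ∃ f : Fin r → (Fin n → ℝ), (∀ i ∈ I, f i ∈ Δ i) ∧ x = ∑ i ∈ I, f i}

/-- The point `x × e_i ∈ ℝ^d × ℝ^r`. -/
def cayleyPt {d r : ℕ} (x : Fin d → ℝ) (i : Fin r) : Fin (d + r) → ℝ :=
  Fin.append x (fun j => if j = i then 1 else 0)

/-- The Cayley polytope `Δ 0 * ⋯ * Δ (r-1) ⊂ ℝ^d × ℝ^r`. -/
def cayley {d r : ℕ} (Δ : Fin r → Set (Fin d → ℝ)) : Set (Fin (d + r) → ℝ) :=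
  convexHull ℝ (⋃ i, (fun x => cayleyPt x i) '' Δ i)

/-- `F` is a facet of `P`: a nonempty exposed face of dimension one less. -/
def IsFacetOf {n : ℕ} (F P : Set (Fin n → ℝ)) : Prop :=
  IsExposed ℝ P F ∧ F.Nonempty ∧ polyDim F + 1 = polyDim P

/-- A special `(r-1)`-simplex of `P`: `r` affinely independent lattice points of `P`
such that every facet of `P` contains exactly `r - 1` of them. -/
def IsSpecialSimplex {n : ℕ} (P : Set (Fin n → ℝ)) (r : ℕ) (v : Fin r → Fin n → ℝ) : Prop :=
  (∀ i, IsLatticePt (v i) ∧ v i ∈ P) ∧ AffineIndependent ℝ v ∧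
  ∀ F, IsFacetOf F P → ∃! i, v i ∉ F

/-- `∇_i = {y : ⟨x,y⟩ ≥ -δ_{ij} ∀ x ∈ Δ_j ∀ j}`, the polytopes of the dual nef-partition. -/
def nefDual {d r : ℕ} (Δ : Fin r → Set (Fin d → ℝ)) (i : Fin r) : Set (Fin d → ℝ) :=
  {y | ∀ j, ∀ x ∈ Δ j, -(if i = j then (1 : ℝ) else 0) ≤ pairR x y}

/-- A centered nef-partition: lattice polytopes containing `0` whose Minkowski sum is a
reflexive polytope with `0` as its unique interior lattice point. -/
def IsCenteredNefPartition {d r : ℕ} (Δ : Fin r → Set (Fin d → ℝ)) : Prop :=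
  (∀ i, IsLatticePoly (Δ i) ∧ (0 : Fin d → ℝ) ∈ Δ i) ∧
  IsReflexivePoly (minkSum Δ) ∧
  ∀ x, IsLatticePt x → x ∈ interior (minkSum Δ) → x = 0

/-- Two centered nef-partitions dual to each other. -/
def AreDualNefPartitions {d r : ℕ} (Δ Nb : Fin r → Set (Fin d → ℝ)) : Prop :=
  IsCenteredNefPartition Δ ∧ IsCenteredNefPartition Nb ∧
  (∀ i, Nb i = nefDual Δ i) ∧ (∀ i, Δ i = nefDual Nb i)

/-- A Gorenstein cone with its distinguished lattice point `nσ`: a full-dimensional cone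
generated by finitely many lattice points on the hyperplane `⟨·, nσ⟩ = 1`. -/
def IsGorensteinCone {n : ℕ} (σ : Set (Fin n → ℝ)) (nσ : Fin n → ℝ) : Prop :=
  IsLatticePt nσ ∧ Submodule.span ℝ σ = ⊤ ∧
  ∃ V : Finset (Fin n → ℝ), V.Nonempty ∧
    (∀ v ∈ V, IsLatticePt v ∧ pairR v nσ = 1) ∧
    σ = {x | ∃ c : (Fin n → ℝ) → ℝ, (∀ v, 0 ≤ c v) ∧ x = ∑ v ∈ V, c v • v}

/-- The dual cone. -/
def dualCone {n : ℕ} (σ : Set (Fin n → ℝ)) : Set (Fin n → ℝ) :=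
  {y | ∀ x ∈ σ, 0 ≤ pairR x y}

/-- Integrally closed lattice polytope: every lattice point of `k • P` is a sum of `k`
lattice points of `P`. -/
def IntegrallyClosed {n : ℕ} (P : Set (Fin n → ℝ)) : Prop :=
  ∀ (k : ℕ) (x : Fin n → ℝ), IsLatticePt x → x ∈ (k : ℝ) • P →
    ∃ v : Fin k → (Fin n → ℝ), (∀ j, IsLatticePt (v j) ∧ v j ∈ P) ∧ x = ∑ j, v j

/-!
Write `m_j(y) = min_{x ∈ Δ_j} ⟨x, y⟩`, so that `∇_i = {y | m_j(y) ≥ -δ_ij for all j}`. Every `y`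
is a nonnegative combination `∑ c_η η` of lattice points `η` of `Δ*` lying on one face of `Δ*`,
and the `m_j` are linear on the cone over that face. Each such `η` has integer values
`m_j(η) ≤ 0` summing to `-1`, so `η ∈ ∇_j` whenever `m_j(η) ≠ 0`; splitting `η = ∑_j (-m_j(η)) η`
writes `y = ∑_j y_j` with `y_j ∈ (-m_j(y)) • conv({0} ∪ (∇_j ∩ Δ* ∩ ℤ^d))`. For `y ∈ ∇_i` this
shows that `∇_i` is a lattice polytope; for `m_j(y) ≥ -1` it gives `Δ* ⊆ ∇` (hence `0 ∈ int ∇`)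
and `∇* = conv({0} ∪ ⋃_j Δ_j)`; pairing the pieces `y_j` with `x` gives `Δ_i = nefDual ∇ i` by
separation. Finally, the only interior lattice point of a reflexive polytope is `0`.
-/

open Filter Topology

section Pairing

variable {n : ℕ}

theorem pairR_comm (x y : Fin n → ℝ) : pairR x y = pairR y x := dotProduct_comm x y

@[simp] theorem pairR_zero_left (y : Fin n → ℝ) : pairR 0 y = 0 := zero_dotProduct y

theorem pairR_smul_left (c : ℝ) (x y : Fin n → ℝ) : pairR (c • x) y = c * pairR x y :=
  smul_dotProduct c x y

theorem pairR_smul_right (c : ℝ) (x y : Fin n → ℝ) : pairR x (c • y) = c * pairR x y :=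
  dotProduct_smul c x y

theorem pairR_sub_left (x x' y : Fin n → ℝ) : pairR (x - x') y = pairR x y - pairR x' y :=
  sub_dotProduct x x' y

theorem pairR_sum_left {ι : Type*} (s : Finset ι) (x : ι → Fin n → ℝ) (y : Fin n → ℝ) :
    pairR (∑ i ∈ s, x i) y = ∑ i ∈ s, pairR (x i) y :=
  sum_dotProduct s x y

theorem pairR_sum_right {ι : Type*} (s : Finset ι) (x : Fin n → ℝ) (y : ι → Fin n → ℝ) :
    pairR x (∑ i ∈ s, y i) = ∑ i ∈ s, pairR x (y i) :=
  dotProduct_sum x s y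

theorem pairR_self_pos {x : Fin n → ℝ} (hx : x ≠ 0) : 0 < pairR x x :=
  (Finset.sum_nonneg fun k _ => mul_self_nonneg (x k)).lt_of_ne
    (Ne.symm (mt dotProduct_self_eq_zero.mp hx))

theorem continuous_pairR_right (x : Fin n → ℝ) : Continuous (pairR x) := by
  unfold pairR; fun_prop

theorem isLatticePt_iff {x : Fin n → ℝ} :
    IsLatticePt x ↔ ∀ k, x k ∈ (Int.castRingHom ℝ).range := by
  simp [IsLatticePt, eq_comm]

theorem IsLatticePt.sum {ι : Type*} {s : Finset ι} {x : ι → Fin n → ℝ}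
    (hx : ∀ i ∈ s, IsLatticePt (x i)) : IsLatticePt (∑ i ∈ s, x i) :=
  isLatticePt_iff.mpr fun k => by
    simpa only [Finset.sum_apply] using sum_mem fun i hi => isLatticePt_iff.mp (hx i hi) k

theorem IsLatticePt.exists_pairR_eq_int {x y : Fin n → ℝ} (hx : IsLatticePt x)
    (hy : IsLatticePt y) : ∃ m : ℤ, pairR x y = m := by
  obtain ⟨m, hm⟩ : pairR x y ∈ (Int.castRingHom ℝ).range :=
    sum_mem fun k _ => mul_mem (isLatticePt_iff.mp hx k) (isLatticePt_iff.mp hy k)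
  exact ⟨m, by simpa using hm.symm⟩

end Pairing

section Polytopes

variable {n : ℕ}

theorem le_pairR_of_mem_convexHull {V : Set (Fin n → ℝ)} {y : Fin n → ℝ} {c : ℝ}
    (hV : ∀ v ∈ V, c ≤ pairR v y) {x : Fin n → ℝ} (hx : x ∈ convexHull ℝ V) :
    c ≤ pairR x y :=
  convexHull_min hV (convex_halfSpace_ge
    ⟨fun a b => add_dotProduct a b y, fun c a => smul_dotProduct c a y⟩ c) hx

theorem exists_pairR_lt_of_mem_interior {P : Set (Fin n → ℝ)} {x v : Fin n → ℝ}
    (hx : x ∈ interior P) (hv : v ≠ 0) : ∃ x' ∈ P, pairR x' v < pairR x v := by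
  have hnear : ∀ᶠ ε : ℝ in 𝓝 0, x - ε • v ∈ P := by
    have hcont : Continuous fun ε : ℝ => x - ε • v := by fun_prop
    have := hcont.tendsto 0
    rw [zero_smul, sub_zero] at this
    exact this.eventually (mem_interior_iff_mem_nhds.mp hx)
  obtain ⟨ε, hεP, hε⟩ :=
    ((hnear.filter_mono nhdsWithin_le_nhds).and (self_mem_nhdsWithin (s := Set.Ioi 0))).exists
  refine ⟨_, hεP, ?_⟩
  rw [pairR_sub_left, pairR_smul_left]
  nlinarith [pairR_self_pos hv]

theorem exists_mem_dualPoly_pairR_lt {P : Set (Fin n → ℝ)} (hconv : Convex ℝ P)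
    (hclosed : IsClosed P) (h0 : (0 : Fin n → ℝ) ∈ P) {x : Fin n → ℝ} (hx : x ∉ P) :
    ∃ y ∈ dualPoly P, pairR x y < -1 := by
  classical
  obtain ⟨f, β, hfP, hfx⟩ := geometric_hahn_banach_closed_point hconv hclosed hx
  set u : Fin n → ℝ := fun k => f fun j => if k = j then 1 else 0
  have hf : ∀ z, f z = pairR z u := fun z => by
    simpa [pairR, u] using LinearMap.pi_apply_eq_sum_univ (f : (Fin n → ℝ) →ₗ[ℝ] ℝ) z
  have hβ : 0 < β := by simpa using hfP 0 h0
  refine ⟨-β⁻¹ • u, fun z hz => ?_, ?_⟩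
  · have := hfP z hz
    rw [hf] at this
    rw [pairR_smul_right, neg_mul, neg_le_neg_iff, inv_mul_le_iff₀ hβ, mul_one]
    exact this.le
  · rw [hf] at hfx
    rw [pairR_smul_right, neg_mul, neg_lt_neg_iff, lt_inv_mul_iff₀ hβ, mul_one]
    exact hfx

theorem zero_mem_interior_dualPoly_convexHull (W : Finset (Fin n → ℝ)) :
    (0 : Fin n → ℝ) ∈ interior (dualPoly (convexHull ℝ (W : Set (Fin n → ℝ)))) := by
  rw [mem_interior]
  refine ⟨⋂ w ∈ W, {y | -1 < pairR w y}, fun y hy x hx => ?_,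
    isOpen_biInter_finset fun w _ => isOpen_lt continuous_const (continuous_pairR_right w),
    by simp [pairR]⟩
  exact le_pairR_of_mem_convexHull (fun w hw => (Set.mem_iInter₂.mp hy w hw).le) hx

theorem IsReflexivePoly.eq_zero_of_mem_interior {P : Set (Fin n → ℝ)} (hP : IsReflexivePoly P)
    {x : Fin n → ℝ} (hx : IsLatticePt x) (hxP : x ∈ interior P) : x = 0 := by
  obtain ⟨⟨W, -, -, rfl⟩, -, V, -, hV, hPV⟩ := hP
  by_contra hx0
  -- `⟨v, x⟩` is an integer, and `> -1` because `x` is interior and `v ∈ P*`.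
  have hV_nonneg : ∀ v ∈ V, 0 ≤ pairR v x := by
    intro v hv
    rcases eq_or_ne v 0 with rfl | hv0
    · simp
    obtain ⟨x', hx', hlt⟩ := exists_pairR_lt_of_mem_interior hxP hv0
    have hvP : v ∈ dualPoly (convexHull ℝ ↑W) := hPV ▸ subset_convexHull ℝ _ hv
    obtain ⟨m, hm⟩ := (hV v hv).exists_pairR_eq_int hx
    have : (-1 : ℝ) < m := by linarith [hvP x' hx', pairR_comm v x]
    have : (-1 : ℤ) < m := by exact_mod_cast this
    rw [hm]
    exact_mod_cast (by omega : (0 : ℤ) ≤ m)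
  obtain ⟨y, hy, hyx⟩ :=
    exists_pairR_lt_of_mem_interior (zero_mem_interior_dualPoly_convexHull W) hx0
  rw [hPV] at hy
  rw [pairR_zero_left] at hyx
  linarith [le_pairR_of_mem_convexHull hV_nonneg hy]

theorem polyDim_eq_of_nonempty_interior {P : Set (Fin n → ℝ)} (hP : (interior P).Nonempty) :
    polyDim P = n := by
  rw [polyDim, affineSpan_eq_top_of_nonempty_interior
      (hP.mono (interior_mono (subset_convexHull ℝ P))),
    AffineSubspace.direction_top, finrank_top, Module.finrank_fin_fun]

theorem minkSum_eq_sum {r : ℕ} (P : Fin r → Set (Fin n → ℝ)) : minkSum P = ∑ i, P i := by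
  ext x
  rw [Set.mem_fintype_sum]
  exact ⟨fun ⟨f, hf, hx⟩ => ⟨f, hf, hx.symm⟩, fun ⟨f, hf, hx⟩ => ⟨f, hf, hx.symm⟩⟩

theorem minkSum_convexHull {r : ℕ} (V : Fin r → Finset (Fin n → ℝ)) :
    minkSum (fun i => convexHull ℝ (V i : Set (Fin n → ℝ))) =
      convexHull ℝ ↑((Fintype.piFinset V).image fun f => ∑ i, f i) := by
  classical
  rw [minkSum_eq_sum, ← convexHull_sum, ← minkSum_eq_sum]
  congr 1
  ext x
  simp [minkSum, eq_comm]

theorem isLatticePoly_minkSum {r : ℕ} {P : Fin r → Set (Fin n → ℝ)}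
    (hP : ∀ i, IsLatticePoly (P i)) : IsLatticePoly (minkSum P) := by
  classical
  choose V hVne hV hPV using hP
  refine ⟨(Fintype.piFinset V).image fun f => ∑ i, f i,
    (Fintype.piFinset_nonempty.mpr hVne).image _, ?_, ?_⟩
  · simp only [Finset.mem_image, Fintype.mem_piFinset]
    rintro _ ⟨f, hf, rfl⟩
    exact IsLatticePt.sum fun i _ => hV i _ (hf i)
  · rw [← minkSum_convexHull]
    exact congrArg minkSum (funext hPV)

end Polytopes

theorem sum_smul_mem_smul_convexHull_insert_zero {ι E : Type*} [AddCommGroup E] [Module ℝ E]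
    (s : Finset ι) {w : ι → ℝ} {z : ι → E} {A : Set E} (hw : ∀ i ∈ s, 0 ≤ w i)
    (hz : ∀ i ∈ s, w i ≠ 0 → z i ∈ A) :
    ∑ i ∈ s, w i • z i ∈ (∑ i ∈ s, w i) • convexHull ℝ (insert 0 A) := by
  classical
  set z' : ι → E := fun i => if w i = 0 then 0 else z i
  have hz' : ∑ i ∈ s, w i • z i = ∑ i ∈ s, w i • z' i :=
    Finset.sum_congr rfl fun i _ => by by_cases h : w i = 0 <;> simp [z', h]
  rcases (Finset.sum_nonneg hw).eq_or_lt with h | h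
  · have hw0 := (Finset.sum_eq_zero_iff_of_nonneg hw).mp h.symm
    rw [← h, Set.zero_smul_set ⟨0, subset_convexHull ℝ _ (Set.mem_insert _ _)⟩,
      Finset.sum_eq_zero fun i hi => by simp [hw0 i hi]]
    rfl
  · refine ⟨s.centerMass w z', s.centerMass_mem_convexHull hw h fun i hi => ?_, ?_⟩
    · by_cases h0 : w i = 0
      · simp [z', h0]
      · simpa [z', h0] using Or.inr (hz i hi h0)
    · simp only [Finset.centerMass, smul_smul, mul_inv_cancel₀ h.ne', one_smul, hz']

theorem eq_of_sum_mul_eq_of_le {ι : Type*} {s : Finset ι} {c g : ι → ℝ} {a : ℝ}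
    (hc : ∀ i ∈ s, 0 ≤ c i) (hc1 : ∑ i ∈ s, c i = 1) (hg : ∀ i ∈ s, a ≤ g i)
    (h : ∑ i ∈ s, c i * g i = a) {i : ι} (hi : i ∈ s) (hci : c i ≠ 0) : g i = a := by
  have h0 : ∑ i ∈ s, c i * (g i - a) = 0 := by
    simp only [mul_sub, Finset.sum_sub_distrib, ← Finset.sum_mul, hc1, h]
    ring
  have := (Finset.sum_eq_zero_iff_of_nonneg fun j hj =>
    mul_nonneg (hc j hj) (sub_nonneg.mpr (hg j hj))).mp h0 i hi
  rcases mul_eq_zero.mp this with h | h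
  · exact absurd h hci
  · linarith

theorem neg_ite_le_of_sum_ge {ι : Type*} [Fintype ι] [DecidableEq ι] {a : ι → ℝ}
    (hint : ∀ k, ∃ m : ℤ, a k = m) (hnp : ∀ k, a k ≤ 0) (hsum : -1 ≤ ∑ k, a k) {j : ι}
    (hj : a j ≠ 0) (k : ι) : -(if j = k then 1 else 0) ≤ a k := by
  have hle : ∀ s : Finset ι, ∑ k, a k ≤ ∑ k ∈ s, a k := fun s =>
    Finset.sum_le_sum_of_subset_of_nonpos' (Finset.subset_univ s) fun k _ _ => hnp k
  have haj : a j ≤ -1 := by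
    obtain ⟨m, hm⟩ := hint j
    have : m ≤ 0 := by exact_mod_cast hm ▸ hnp j
    rw [hm] at hj ⊢
    have : m ≠ 0 := by exact_mod_cast hj
    exact_mod_cast (show m ≤ -1 by omega)
  split_ifs with hjk
  · subst hjk
    simpa using (hle {j}).trans' hsum
  · have := hle {j, k}
    rw [Finset.sum_pair hjk] at this
    linarith

theorem zero_mem_nefDual {d r : ℕ} (Δ : Fin r → Set (Fin d → ℝ)) (i : Fin r) :
    (0 : Fin d → ℝ) ∈ nefDual Δ i := fun j x _ => by
  simp only [pairR, Pi.zero_apply, mul_zero, Finset.sum_const_zero, neg_nonpos]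
  split_ifs <;> norm_num

theorem neg_one_le_pairR_of_mem_minkSum_nefDual {d r : ℕ} {Δ : Fin r → Set (Fin d → ℝ)}
    {i : Fin r} {v y : Fin d → ℝ} (hv : v ∈ Δ i) (hy : y ∈ minkSum (nefDual Δ)) :
    -1 ≤ pairR v y := by
  obtain ⟨g, hg, rfl⟩ := hy
  rw [pairR_sum_right]
  calc (-1 : ℝ) = ∑ j, -(if j = i then 1 else 0) := by simp
    _ ≤ ∑ j, pairR v (g j) := Finset.sum_le_sum fun j _ => hg j i v hv

/-- Lattice points `V j` spanning `Δ j` and `H` spanning `Δ*`, for `Δ = ∑ j, Δ j`. -/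
structure NefPresentation {d r : ℕ} (Δ : Fin r → Set (Fin d → ℝ)) where
  V : Fin r → Finset (Fin d → ℝ)
  V_nonempty : ∀ j, (V j).Nonempty
  isLatticePt_of_mem_V : ∀ j, ∀ v ∈ V j, IsLatticePt v
  eq_convexHull : ∀ j, Δ j = convexHull ℝ (V j : Set (Fin d → ℝ))
  zero_mem : ∀ j, (0 : Fin d → ℝ) ∈ Δ j
  H : Finset (Fin d → ℝ)
  isLatticePt_of_mem_H : ∀ η ∈ H, IsLatticePt η
  dualPoly_eq : dualPoly (minkSum Δ) = convexHull ℝ (H : Set (Fin d → ℝ))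
  zero_mem_interior : (0 : Fin d → ℝ) ∈ interior (minkSum Δ)

namespace NefPresentation

variable {d r : ℕ} {Δ : Fin r → Set (Fin d → ℝ)} (C : NefPresentation Δ)

/-- `m_j(y) = min_{x ∈ Δ_j} ⟨x, y⟩`, computed on the vertices `V j`. -/
def minPairing (j : Fin r) (y : Fin d → ℝ) : ℝ :=
  (C.V j).inf' (C.V_nonempty j) fun v => pairR v y

theorem mem_of_mem_V {j : Fin r} {v : Fin d → ℝ} (hv : v ∈ C.V j) : v ∈ Δ j :=
  C.eq_convexHull j ▸ subset_convexHull ℝ _ hv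

theorem le_minPairing_iff {j : Fin r} {y : Fin d → ℝ} {c : ℝ} :
    c ≤ C.minPairing j y ↔ ∀ x ∈ Δ j, c ≤ pairR x y := by
  rw [minPairing, Finset.le_inf'_iff, C.eq_convexHull]
  exact ⟨fun h x hx => le_pairR_of_mem_convexHull h hx,
    fun h v hv => h v (subset_convexHull ℝ _ hv)⟩

theorem minPairing_le {j : Fin r} {x : Fin d → ℝ} (hx : x ∈ Δ j) (y : Fin d → ℝ) :
    C.minPairing j y ≤ pairR x y :=
  C.le_minPairing_iff.mp le_rfl x hx

theorem exists_minPairing_eq (j : Fin r) (y : Fin d → ℝ) :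
    ∃ w ∈ C.V j, pairR w y = C.minPairing j y := by
  obtain ⟨w, hw, h⟩ := (C.V j).exists_mem_eq_inf' (C.V_nonempty j) fun v => pairR v y
  exact ⟨w, hw, h.symm⟩

theorem minPairing_nonpos (j : Fin r) (y : Fin d → ℝ) : C.minPairing j y ≤ 0 := by
  simpa using C.minPairing_le (C.zero_mem j) y

theorem minPairing_zero (j : Fin r) : C.minPairing j 0 = 0 :=
  le_antisymm (C.minPairing_nonpos j 0) (C.le_minPairing_iff.mpr fun x _ => by simp [pairR])

theorem exists_minPairing_eq_int (j : Fin r) {y : Fin d → ℝ} (hy : IsLatticePt y) :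
    ∃ m : ℤ, C.minPairing j y = m := by
  obtain ⟨w, hw, hwy⟩ := C.exists_minPairing_eq j y
  rw [← hwy]
  exact (C.isLatticePt_of_mem_V j w hw).exists_pairR_eq_int hy

theorem mem_nefDual_iff {i : Fin r} {y : Fin d → ℝ} :
    y ∈ nefDual Δ i ↔ ∀ j, -(if i = j then 1 else 0) ≤ C.minPairing j y := by
  simp only [le_minPairing_iff]
  rfl

theorem sum_minPairing_le {x : Fin d → ℝ} (hx : x ∈ minkSum Δ) (y : Fin d → ℝ) :
    ∑ j, C.minPairing j y ≤ pairR x y := by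
  obtain ⟨f, hf, rfl⟩ := hx
  rw [pairR_sum_left]
  exact Finset.sum_le_sum fun j _ => C.minPairing_le (hf j) y

theorem neg_one_le_sum_minPairing {y : Fin d → ℝ} (hy : y ∈ dualPoly (minkSum Δ)) :
    -1 ≤ ∑ j, C.minPairing j y := by
  choose w hw hwy using fun j => C.exists_minPairing_eq j y
  have := hy (∑ j, w j) ⟨w, fun j => C.mem_of_mem_V (hw j), rfl⟩
  rwa [pairR_sum_left, Finset.sum_congr rfl fun j _ => hwy j] at this

theorem neg_one_le_minPairing {y : Fin d → ℝ} (hy : y ∈ dualPoly (minkSum Δ)) (j : Fin r) :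
    -1 ≤ C.minPairing j y := by
  refine C.le_minPairing_iff.mpr fun x hx => hy x ⟨Pi.single j x, fun k => ?_, by simp⟩
  rcases eq_or_ne k j with rfl | hkj
  · simpa using hx
  · simpa [hkj] using C.zero_mem k

/-- The integers `minPairing k η ≤ 0` sum to at least `-1`, so a nonzero one is `-1` and the
others vanish. -/
theorem mem_nefDual_of_minPairing_ne_zero {η : Fin d → ℝ} (hη : IsLatticePt η)
    (hηΔ : η ∈ dualPoly (minkSum Δ)) {j : Fin r} (hj : C.minPairing j η ≠ 0) :
    η ∈ nefDual Δ j :=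
  C.mem_nefDual_iff.mpr <| neg_ite_le_of_sum_ge (fun k => C.exists_minPairing_eq_int k hη)
    (fun k => C.minPairing_nonpos k η) (C.neg_one_le_sum_minPairing hηΔ) hj

theorem pairR_eq_minPairing_of_pairR_sum_eq {w : Fin r → Fin d → ℝ} (hw : ∀ j, w j ∈ Δ j)
    {η : Fin d → ℝ} (hη : η ∈ dualPoly (minkSum Δ)) (h : pairR (∑ j, w j) η = -1) (j : Fin r) :
    pairR (w j) η = C.minPairing j η := by
  have hle : ∀ j ∈ Finset.univ, C.minPairing j η ≤ pairR (w j) η :=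
    fun j _ => C.minPairing_le (hw j) η
  have heq : ∑ j, C.minPairing j η = ∑ j, pairR (w j) η :=
    le_antisymm (Finset.sum_le_sum hle)
      (by rw [← pairR_sum_left, h]; exact C.neg_one_le_sum_minPairing hη)
  exact ((Finset.sum_eq_sum_iff_of_le hle).mp heq j (Finset.mem_univ j)).symm

theorem mem_dualPoly_of_mem_H {η : Fin d → ℝ} (hη : η ∈ C.H) : η ∈ dualPoly (minkSum Δ) :=
  C.dualPoly_eq ▸ subset_convexHull ℝ _ hη

theorem sum_minPairing_neg {y : Fin d → ℝ} (hy : y ≠ 0) : ∑ j, C.minPairing j y < 0 := by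
  obtain ⟨x, hx, hxy⟩ := exists_pairR_lt_of_mem_interior C.zero_mem_interior hy
  rw [pairR_zero_left] at hxy
  exact (C.sum_minPairing_le hx y).trans_lt hxy

/-- After scaling, `y` lies on the face of `Δ*` where `∑ j, w j` pairs to `-1`, for minimizers
`w j` of `⟨·, y⟩` on `Δ j`; each `minPairing j` is linear on the cone over that face. -/
theorem exists_sum_smul_eq (y : Fin d → ℝ) :
    ∃ c : (Fin d → ℝ) → ℝ, (∀ η ∈ C.H, 0 ≤ c η) ∧
      (∀ η ∈ C.H, c η ≠ 0 → ∑ j, C.minPairing j η = -1) ∧ y = ∑ η ∈ C.H, c η • η ∧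
      ∀ j, C.minPairing j y = ∑ η ∈ C.H, c η * C.minPairing j η := by
  rcases eq_or_ne y 0 with rfl | hy
  · exact ⟨0, by simp, by simp, by simp, fun j => by simp [C.minPairing_zero]⟩
  choose w hwV hwy using fun j => C.exists_minPairing_eq j y
  have hwΔ : ∀ j, w j ∈ Δ j := fun j => C.mem_of_mem_V (hwV j)
  set t := -∑ j, C.minPairing j y
  have ht : 0 < t := neg_pos.mpr (C.sum_minPairing_neg hy)
  have hvy : pairR (∑ j, w j) (t⁻¹ • y) = -1 := by
    rw [pairR_smul_right, pairR_sum_left, Finset.sum_congr rfl fun j _ => hwy j,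
      show ∑ j, C.minPairing j y = -t by simp [t], mul_neg, inv_mul_cancel₀ ht.ne']
  have hyH : t⁻¹ • y ∈ convexHull ℝ (C.H : Set (Fin d → ℝ)) := C.dualPoly_eq ▸ fun x hx => by
    have := C.sum_minPairing_le hx y
    rw [pairR_smul_right]
    calc (-1 : ℝ) = t⁻¹ * -t := by field_simp
      _ ≤ t⁻¹ * pairR x y := mul_le_mul_of_nonneg_left (by linarith) (inv_nonneg.mpr ht.le)
  obtain ⟨c, hc0, hc1, hcy⟩ := Finset.mem_convexHull'.mp hyH
  have hface : ∀ η ∈ C.H, c η ≠ 0 → pairR (∑ j, w j) η = -1 :=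
    fun η hη hcη => eq_of_sum_mul_eq_of_le hc0 hc1
      (fun η' hη' => C.mem_dualPoly_of_mem_H hη' _ ⟨w, hwΔ, rfl⟩)
      (by simp_rw [← pairR_smul_right, ← pairR_sum_right, hcy, hvy]) hη hcη
  have htight : ∀ η ∈ C.H, c η ≠ 0 → ∀ j, pairR (w j) η = C.minPairing j η :=
    fun η hη hcη => C.pairR_eq_minPairing_of_pairR_sum_eq hwΔ (C.mem_dualPoly_of_mem_H hη)
      (hface η hη hcη)
  have hyc : y = t • ∑ η ∈ C.H, c η • η := by rw [hcy, smul_inv_smul₀ ht.ne']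
  refine ⟨fun η => t * c η, fun η hη => mul_nonneg ht.le (hc0 η hη), fun η hη hcη => ?_, ?_,
    fun j => ?_⟩
  · have hcη' := right_ne_zero_of_mul hcη
    rw [← hface η hη hcη', pairR_sum_left]
    exact Finset.sum_congr rfl fun j _ => (htight η hη hcη' j).symm
  · simp only [mul_smul, ← Finset.smul_sum, ← hyc]
  · rw [← hwy j, hyc, pairR_smul_right, pairR_sum_right, Finset.mul_sum]
    refine Finset.sum_congr rfl fun η hη => ?_
    rw [pairR_smul_right]
    by_cases hcη : c η = 0
    · simp [hcη]
    · rw [htight η hη hcη j, mul_assoc]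

open Classical in
def nefDualGens (j : Fin r) : Finset (Fin d → ℝ) :=
  insert 0 (C.H.filter (· ∈ nefDual Δ j))

theorem zero_mem_convexHull_nefDualGens (j : Fin r) :
    (0 : Fin d → ℝ) ∈ convexHull ℝ (C.nefDualGens j : Set (Fin d → ℝ)) :=
  subset_convexHull ℝ _ (by simp [nefDualGens])

theorem nefDualGens_subset (j : Fin r) : ↑(C.nefDualGens j) ⊆ nefDual Δ j := by
  intro g hg
  simp only [nefDualGens, Finset.coe_insert, Finset.coe_filter, Set.mem_insert_iff] at hg
  rcases hg with rfl | ⟨-, hg⟩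
  · exact zero_mem_nefDual Δ j
  · exact hg

theorem exists_decomposition (y : Fin d → ℝ) :
    ∃ f : Fin r → Fin d → ℝ, y = ∑ j, f j ∧
      ∀ j, f j ∈ (-C.minPairing j y) • convexHull ℝ (C.nefDualGens j : Set (Fin d → ℝ)) := by
  obtain ⟨c, hc0, hcH, hyc, hm⟩ := C.exists_sum_smul_eq y
  refine ⟨fun j => ∑ η ∈ C.H, (c η * -C.minPairing j η) • η, ?_, fun j => ?_⟩
  · rw [Finset.sum_comm, hyc]
    refine Finset.sum_congr rfl fun η hη => ?_
    rw [← Finset.sum_smul, ← Finset.mul_sum, Finset.sum_neg_distrib]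
    by_cases hcη : c η = 0
    · simp [hcη]
    · rw [hcH η hη hcη, neg_neg, mul_one]
  · have hsum : -C.minPairing j y = ∑ η ∈ C.H, c η * -C.minPairing j η := by
      simp [hm j, Finset.sum_neg_distrib]
    rw [hsum, nefDualGens, Finset.coe_insert, Finset.coe_filter]
    refine sum_smul_mem_smul_convexHull_insert_zero _
      (fun η hη => mul_nonneg (hc0 η hη) (neg_nonneg.mpr (C.minPairing_nonpos j η)))
      fun η hη hne => ⟨hη, ?_⟩
    exact C.mem_nefDual_of_minPairing_ne_zero (C.isLatticePt_of_mem_H η hη)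
      (C.mem_dualPoly_of_mem_H hη) (neg_ne_zero.mp (right_ne_zero_of_mul hne))

theorem nefDual_eq_convexHull (i : Fin r) :
    nefDual Δ i = convexHull ℝ (C.nefDualGens i : Set (Fin d → ℝ)) := by
  refine Set.Subset.antisymm (fun y hy => ?_) fun y hy j x hx => ?_
  · obtain ⟨f, hyf, hf⟩ := C.exists_decomposition y
    have hmi := C.mem_nefDual_iff.mp hy
    have hf0 : ∀ j ≠ i, f j = 0 := fun j hji => by
      have hmj : C.minPairing j y = 0 :=
        le_antisymm (C.minPairing_nonpos j y) (by simpa [Ne.symm hji] using hmi j)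
      simpa [hmj, Set.zero_smul_set ⟨0, C.zero_mem_convexHull_nefDualGens j⟩] using hf j
    obtain ⟨g, hg, hgf⟩ := hf i
    rw [hyf, Finset.sum_eq_single i (fun j _ hji => hf0 j hji) (by simp), ← hgf]
    refine (convex_convexHull ℝ _).smul_mem_of_zero_mem (C.zero_mem_convexHull_nefDualGens i) hg
      ⟨neg_nonneg.mpr (C.minPairing_nonpos i y), neg_le.mpr (by simpa using hmi i)⟩
  · rw [pairR_comm]
    refine le_pairR_of_mem_convexHull (fun g hg => ?_) hy
    rw [pairR_comm]
    exact C.nefDualGens_subset i hg j x hx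

theorem mem_minkSum_nefDual_of_neg_one_le {y : Fin d → ℝ} (hy : ∀ j, -1 ≤ C.minPairing j y) :
    y ∈ minkSum (nefDual Δ) := by
  obtain ⟨f, hyf, hf⟩ := C.exists_decomposition y
  refine ⟨f, fun j => ?_, hyf⟩
  obtain ⟨g, hg, hgf⟩ := hf j
  rw [← hgf, C.nefDual_eq_convexHull]
  exact (convex_convexHull ℝ _).smul_mem_of_zero_mem (C.zero_mem_convexHull_nefDualGens j) hg
    ⟨neg_nonneg.mpr (C.minPairing_nonpos j y), neg_le.mpr (hy j)⟩

theorem isLatticePoly_nefDual (C : NefPresentation Δ) (i : Fin r) :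
    IsLatticePoly (nefDual Δ i) := by
  refine ⟨C.nefDualGens i, Finset.insert_nonempty _ _, fun v hv => ?_, C.nefDual_eq_convexHull i⟩
  simp only [nefDualGens, Finset.mem_insert, Finset.mem_filter] at hv
  rcases hv with rfl | ⟨hv, -⟩
  · exact fun _ => ⟨0, by simp⟩
  · exact C.isLatticePt_of_mem_H v hv

theorem zero_mem_interior_minkSum_nefDual (C : NefPresentation Δ) :
    (0 : Fin d → ℝ) ∈ interior (minkSum (nefDual Δ)) := by
  have hsub : dualPoly (minkSum Δ) ⊆ minkSum (nefDual Δ) := fun y hy =>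
    C.mem_minkSum_nefDual_of_neg_one_le (C.neg_one_le_minPairing hy)
  have hΔ : minkSum Δ = convexHull ℝ ↑((Fintype.piFinset C.V).image fun f => ∑ j, f j) :=
    (congrArg minkSum (funext C.eq_convexHull)).trans (minkSum_convexHull C.V)
  exact interior_mono hsub (hΔ ▸ zero_mem_interior_dualPoly_convexHull _)

open Classical in
theorem dualPoly_minkSum_nefDual :
    dualPoly (minkSum (nefDual Δ)) = convexHull ℝ ↑(insert 0 (Finset.univ.biUnion C.V)) := by
  refine Set.Subset.antisymm (fun x hx => ?_) fun x hx y hy => ?_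
  · by_contra hxQ
    obtain ⟨y, hyQ, hxy⟩ := exists_mem_dualPoly_pairR_lt (convex_convexHull ℝ _)
      ((Finset.finite_toSet _).isCompact_convexHull ℝ).isClosed
      (subset_convexHull ℝ _ (by simp)) hxQ
    have hy : ∀ j, -1 ≤ C.minPairing j y := fun j => by
      obtain ⟨w, hw, hwy⟩ := C.exists_minPairing_eq j y
      exact hwy ▸ hyQ w (subset_convexHull ℝ _ (by simpa using Or.inr ⟨j, hw⟩))
    linarith [hx y (C.mem_minkSum_nefDual_of_neg_one_le hy), pairR_comm x y]
  · rw [pairR_comm]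
    refine le_pairR_of_mem_convexHull (fun v hv => ?_) hx
    simp only [Finset.coe_insert, Finset.coe_biUnion, Set.mem_insert_iff] at hv
    rcases hv with rfl | hv
    · simp
    · obtain ⟨j, -, hv⟩ := Set.mem_iUnion₂.mp hv
      exact neg_one_le_pairR_of_mem_minkSum_nefDual (C.mem_of_mem_V hv) hy

theorem isLatticePoly_dualPoly_minkSum_nefDual (C : NefPresentation Δ) :
    IsLatticePoly (dualPoly (minkSum (nefDual Δ))) := by
  classical
  refine ⟨_, Finset.insert_nonempty _ _, fun v hv => ?_, C.dualPoly_minkSum_nefDual⟩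
  simp only [Finset.mem_insert, Finset.mem_biUnion] at hv
  rcases hv with rfl | ⟨j, -, hv⟩
  · exact fun _ => ⟨0, by simp⟩
  · exact C.isLatticePt_of_mem_V j v hv

theorem eq_nefDual_nefDual (C : NefPresentation Δ) (i : Fin r) : Δ i = nefDual (nefDual Δ) i := by
  refine Set.Subset.antisymm (fun x hx j y hy => ?_) fun x hx => ?_
  · rw [pairR_comm]
    simpa [eq_comm] using hy i x hx
  · by_contra hxi
    rw [C.eq_convexHull] at hxi
    obtain ⟨y, hyi, hxy⟩ := exists_mem_dualPoly_pairR_lt (convex_convexHull ℝ _)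
      ((Finset.finite_toSet _).isCompact_convexHull ℝ).isClosed
      (C.eq_convexHull i ▸ C.zero_mem i) hxi
    have hmi : -1 ≤ C.minPairing i y := C.le_minPairing_iff.mpr (C.eq_convexHull i ▸ hyi)
    obtain ⟨f, hyf, hf⟩ := C.exists_decomposition y
    have : C.minPairing i y ≤ pairR x y := by
      rw [show pairR x y = ∑ j, pairR x (f j) by rw [← pairR_sum_right, ← hyf]]
      calc C.minPairing i y = ∑ j, -C.minPairing j y * -(if i = j then 1 else 0) := by simp
        _ ≤ ∑ j, pairR x (f j) := Finset.sum_le_sum fun j _ => by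
          obtain ⟨g, hg, hgf⟩ := hf j
          rw [← hgf, pairR_smul_right, pairR_comm]
          exact mul_le_mul_of_nonneg_left (hx j g (C.nefDual_eq_convexHull j ▸ hg))
            (neg_nonneg.mpr (C.minPairing_nonpos j y))
    linarith

end NefPresentation

theorem dual_nef_partition_general {d r : ℕ}
    (Δ : Fin r → Set (Fin d → ℝ))
    (h : IsCenteredNefPartition Δ) :
    (∀ i, IsLatticePoly (nefDual Δ i) ∧ (0 : Fin d → ℝ) ∈ nefDual Δ i) ∧
    IsReflexivePoly (minkSum (nefDual Δ)) ∧
    polyDim (minkSum (nefDual Δ)) = d ∧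
    (∀ x, IsLatticePt x → x ∈ interior (minkSum (nefDual Δ)) → x = 0) ∧
    (∀ i, Δ i = nefDual (nefDual Δ) i) := by
  obtain ⟨hΔ, ⟨-, h0, H, -, hH, hΔH⟩, -⟩ := h
  choose V hVne hV hΔV using fun i => (hΔ i).1
  let C : NefPresentation Δ :=
    ⟨V, hVne, hV, hΔV, fun i => (hΔ i).2, H, hH, hΔH, h0⟩
  have hrefl : IsReflexivePoly (minkSum (nefDual Δ)) :=
    ⟨isLatticePoly_minkSum C.isLatticePoly_nefDual, C.zero_mem_interior_minkSum_nefDual,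
      C.isLatticePoly_dualPoly_minkSum_nefDual⟩
  exact ⟨fun i => ⟨C.isLatticePoly_nefDual i, zero_mem_nefDual Δ i⟩, hrefl,
    polyDim_eq_of_nonempty_interior ⟨0, hrefl.2.1⟩,
    fun x hx hxi => hrefl.eq_zero_of_mem_interior hx hxi, C.eq_nefDual_nefDual⟩

/-- Given a centered nef-partition `Δ = Δ_1 + ⋯ + Δ_r`, the polytopes
`∇_i := {y : ⟨x,y⟩ ≥ -δ_{ij} ∀ x ∈ Δ_j ∀ j}` are lattice polytopes containing `0`,
their Minkowski sum is a `d`-dimensional reflexive polytope with `0` as its unique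
interior lattice point, and `Δ_i = {x : ⟨x,y⟩ ≥ -δ_{ij} ∀ y ∈ ∇_j ∀ j}`; that is, the
`∇_i` form the dual centered nef-partition. -/
theorem dual_nef_partition {d r : ℕ} (hr : 0 < r)
    (Δ : Fin r → Set (Fin d → ℝ))
    (h : IsCenteredNefPartition Δ) :
    (∀ i, IsLatticePoly (nefDual Δ i) ∧ (0 : Fin d → ℝ) ∈ nefDual Δ i) ∧
    IsReflexivePoly (minkSum (nefDual Δ)) ∧
    polyDim (minkSum (nefDual Δ)) = d ∧
    (∀ x, IsLatticePt x → x ∈ interior (minkSum (nefDual Δ)) → x = 0) ∧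
    (∀ i, Δ i = nefDual (nefDual Δ) i) :=
  dual_nef_partition_general Δ h
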